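/- arXiv:1901.06714 — 7 statements merged into one kernel-verified Lean document; each statement's English description precedes it below -/
import Mathlib

section
/- Let $N = \{1,\dots,n\}$, let $C \subseteq N$, and let $\beta$ be an integer with $1 < \beta < |C|$. Let $x \in \{0,1\}^n$ satisfy $\sum_{j \in C} x_j \le \beta$, and set $X := xx^T$. Then the cover inequality in the lifted space (CILS) holds: $\sum_{i,j \in C,\ i < j} X_{ij} \le \binom{\beta}{2}$. -/
open Matrix

/-- Validity of the cover inequality in the lifted space (CILS): if the binary vector `x`
satisfies `∑_{j∈C} x_j ≤ β` with `1 < β < |C|`, and `X := x xᵀ`, then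
`∑_{i,j∈C, i<j} X_{ij} ≤ β(β-1)/2`. -/
theorem cils_valid (n : ℕ) (C : Finset (Fin n)) (β : ℤ)
    (hβ1 : 1 < β) (hβC : β < (C.card : ℤ))
    (x : Fin n → ℝ) (hx : ∀ i, x i = 0 ∨ x i = 1)
    (hcover : ∑ j ∈ C, x j ≤ (β : ℝ)) :
    ∑ i ∈ C, ∑ j ∈ C.filter (fun j => i < j), (vecMulVec x x) i j
      ≤ (β : ℝ) * ((β : ℝ) - 1) / 2 := by
  simp only [vecMulVec_apply]
  set s := ∑ j ∈ C, x j with hs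
  have hs0 : 0 ≤ s := Finset.sum_nonneg fun i _ => by rcases hx i with h|h <;> simp [h]
  have hx2 : ∀ i, x i * x i = x i := fun i => by rcases hx i with h|h <;> simp [h]
  have split : ∀ i j : Fin n, x i * x j =
      (if i < j then x i * x j else 0) + (if j < i then x i * x j else 0)
        + (if i = j then x i * x j else 0) := by
    intro i j
    rcases lt_trichotomy i j with h|h|h
    · simp [h, not_lt_of_gt h, ne_of_lt h]
    · simp [h, lt_irrefl]
    · have hne : i ≠ j := ne_of_gt h
      simp [h, not_lt_of_gt h, hne]
  have key : s * s = 2 * (∑ i ∈ C, ∑ j ∈ C.filter (fun j => i < j), x i * x j) + s := by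
    rw [hs, Finset.sum_mul_sum]
    have e1 : ∑ i ∈ C, ∑ j ∈ C, x i * x j
        = (∑ i ∈ C, ∑ j ∈ C, if i < j then x i * x j else 0)
        + (∑ i ∈ C, ∑ j ∈ C, if j < i then x i * x j else 0)
        + (∑ i ∈ C, ∑ j ∈ C, if i = j then x i * x j else 0) := by
      rw [← Finset.sum_add_distrib, ← Finset.sum_add_distrib]
      refine Finset.sum_congr rfl fun i _ => ?_
      rw [← Finset.sum_add_distrib, ← Finset.sum_add_distrib]
      exact Finset.sum_congr rfl fun j _ => split i j
    have e2 : (∑ i ∈ C, ∑ j ∈ C, if j < i then x i * x j else 0)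
        = ∑ i ∈ C, ∑ j ∈ C, if i < j then x i * x j else 0 := by
      rw [Finset.sum_comm]
      refine Finset.sum_congr rfl fun i _ => Finset.sum_congr rfl fun j _ => ?_
      rw [mul_comm]
    have e3 : (∑ i ∈ C, ∑ j ∈ C, if i = j then x i * x j else 0) = s := by
      refine Finset.sum_congr rfl fun i hi => ?_
      rw [Finset.sum_ite_eq C i (fun j => x i * x j), if_pos hi, hx2]
    have e4 : ∀ i, (∑ j ∈ C, if i < j then x i * x j else 0)
        = ∑ j ∈ C.filter (fun j => i < j), x i * x j := fun i =>
      (Finset.sum_filter _ _).symm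
    simp only [e1, e2, e3, e4]
    ring
  have hβ1' : (1:ℝ) < (β:ℝ) := by exact_mod_cast hβ1
  nlinarith [key, hcover, hs0]
end

section
/- Let $N = \{1,\dots,n\}$, $C \subseteq N$ with $|C|$ even, and let $\beta$ be a positive integer with $\beta < |C|$. Let $x \in \{0,1\}^n$ satisfy $\sum_{j \in C} x_j \le \beta$ and set $X := xx^T$. Then for every partition $C_s = \{(i_1,j_1), \dots, (i_p,j_p)\}$ of $C$ into two-element pairs (with $i_k < j_k$), the inequality $\sum_{(i,j) \in C_s} X_{ij} \le \lfloor \beta/2 \rfloor$ holds. -/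
open Matrix

/-- `Cs` is a partition of the finite set `C` into two-element pairs `(i,j)` with `i < j`:
every pair consists of elements of `C` with `i < j`, and every element of `C` belongs to
exactly one pair. -/
def IsPairPartition {n : ℕ} (C : Finset (Fin n)) (Cs : Finset (Fin n × Fin n)) : Prop :=
  (∀ p ∈ Cs, p.1 ∈ C ∧ p.2 ∈ C ∧ p.1 < p.2) ∧
  (∀ i ∈ C, ∃! p, p ∈ Cs ∧ (i = p.1 ∨ i = p.2))

/-- SCILS validity, `|C|` even: if the binary vector `x` satisfies `∑_{j∈C} x_j ≤ β` with
`0 < β < |C|`, `|C|` even, and `X := x xᵀ`, then for every partition `Cs` of `C` into pairs,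
`∑_{(i,j)∈Cs} X_{ij} ≤ ⌊β/2⌋`. -/
theorem scils_valid_even_card (n : ℕ) (C : Finset (Fin n)) (hCeven : Even C.card)
    (β : ℤ) (hβ0 : 0 < β) (hβC : β < (C.card : ℤ))
    (x : Fin n → ℝ) (hx : ∀ i, x i = 0 ∨ x i = 1)
    (hcover : ∑ j ∈ C, x j ≤ (β : ℝ))
    (Cs : Finset (Fin n × Fin n)) (hCs : IsPairPartition C Cs) :
    ∑ p ∈ Cs, (vecMulVec x x) p.1 p.2 ≤ ((β / 2 : ℤ) : ℝ) := by
  obtain ⟨h1, h2⟩ := hCs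
  -- C is the disjoint union of the pairs
  have hC : C = Cs.biUnion (fun p => {p.1, p.2}) := by
    ext i
    simp only [Finset.mem_biUnion, Finset.mem_insert, Finset.mem_singleton]
    constructor
    · intro hi
      obtain ⟨p, ⟨hp, hor⟩, _⟩ := h2 i hi
      exact ⟨p, hp, hor⟩
    · rintro ⟨p, hp, (rfl | rfl)⟩
      · exact (h1 p hp).1
      · exact (h1 p hp).2.1
  have hdisj : ∀ p ∈ Cs, ∀ q ∈ Cs, p ≠ q →
      Disjoint ({p.1, p.2} : Finset (Fin n)) {q.1, q.2} := by
    intro p hp q hq hpq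
    rw [Finset.disjoint_left]
    intro i hip hiq
    simp only [Finset.mem_insert, Finset.mem_singleton] at hip hiq
    have hiC : i ∈ C := by
      rcases hip with rfl | rfl
      · exact (h1 p hp).1
      · exact (h1 p hp).2.1
    obtain ⟨r, _, hr⟩ := h2 i hiC
    exact hpq ((hr p ⟨hp, hip⟩).trans (hr q ⟨hq, hiq⟩).symm)
  have hsum : ∑ j ∈ C, x j = ∑ p ∈ Cs, (x p.1 + x p.2) := by
    rw [hC, Finset.sum_biUnion hdisj]
    refine Finset.sum_congr rfl fun p hp => ?_
    exact Finset.sum_pair (ne_of_lt (h1 p hp).2.2)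
  -- each term is bounded by the average
  have hbound : ∑ p ∈ Cs, (vecMulVec x x) p.1 p.2 ≤ (β : ℝ) / 2 := by
    have : ∑ p ∈ Cs, (vecMulVec x x) p.1 p.2 ≤ ∑ p ∈ Cs, (x p.1 + x p.2) / 2 := by
      refine Finset.sum_le_sum fun p _ => ?_
      rcases hx p.1 with h | h <;> rcases hx p.2 with h' | h' <;>
        simp [vecMulVec_apply, h, h'] <;> norm_num
    calc ∑ p ∈ Cs, (vecMulVec x x) p.1 p.2 ≤ ∑ p ∈ Cs, (x p.1 + x p.2) / 2 := this
      _ = (∑ p ∈ Cs, (x p.1 + x p.2)) / 2 := by rw [Finset.sum_div]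
      _ = (∑ j ∈ C, x j) / 2 := by rw [hsum]
      _ ≤ (β : ℝ) / 2 := by linarith
  -- the LHS is a natural number
  set k : ℕ := (Cs.filter fun p => x p.1 = 1 ∧ x p.2 = 1).card with hk
  have hLHS : ∑ p ∈ Cs, (vecMulVec x x) p.1 p.2 = (k : ℝ) := by
    rw [hk, Finset.card_filter]
    push_cast
    refine Finset.sum_congr rfl fun p _ => ?_
    rcases hx p.1 with h | h <;> rcases hx p.2 with h' | h' <;>
      simp [vecMulVec_apply, h, h']
  rw [hLHS] at hbound ⊢
  have h2k : (2 * k : ℤ) ≤ β := by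
    have : (2 * k : ℝ) ≤ (β : ℝ) := by linarith
    exact_mod_cast this
  have : (k : ℤ) ≤ β / 2 := by
    rw [Int.le_ediv_iff_mul_le (by norm_num)]
    linarith
  exact_mod_cast this
end

section
/- Let $N = \{1,\dots,n\}$, $C \subseteq N$ with $|C|$ odd, and let $\beta$ be an odd positive integer with $\beta < |C|$. Let $x \in \{0,1\}^n$ satisfy $\sum_{j \in C} x_j \le \beta$ and set $X := xx^T$. Then for every $i_0 \in C$ and every partition $C_s$ of $C \setminus \{i_0\}$ into two-element pairs, the inequality $\sum_{(i,j) \in C_s} X_{ij} \le \lfloor \beta/2 \rfloor = (\beta-1)/2$ holds. -/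
open Matrix

/-- SCILS validity, `|C|` odd and `β` odd: if the binary vector `x` satisfies
`∑_{j∈C} x_j ≤ β` with `0 < β < |C|`, `|C|` odd, `β` odd, and `X := x xᵀ`, then for every
`i₀ ∈ C` and every partition `Cs` of `C \ {i₀}` into pairs,
`∑_{(i,j)∈Cs} X_{ij} ≤ ⌊β/2⌋ = (β-1)/2`. -/
theorem scils_valid_odd_card_odd_beta (n : ℕ) (C : Finset (Fin n)) (hCodd : Odd C.card)
    (β : ℤ) (hβ0 : 0 < β) (hβodd : Odd β) (hβC : β < (C.card : ℤ))
    (x : Fin n → ℝ) (hx : ∀ i, x i = 0 ∨ x i = 1)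
    (hcover : ∑ j ∈ C, x j ≤ (β : ℝ))
    (i0 : Fin n) (hi0 : i0 ∈ C)
    (Cs : Finset (Fin n × Fin n)) (hCs : IsPairPartition (C.erase i0) Cs) :
    ∑ p ∈ Cs, (vecMulVec x x) p.1 p.2 ≤ ((β : ℝ) - 1) / 2 := by
  classical
  obtain ⟨h1, h2⟩ := hCs
  have hne : ∀ p ∈ Cs, p.1 ≠ p.2 := fun p hp => ne_of_lt (h1 p hp).2.2
  have hunion : C.erase i0 = Cs.biUnion (fun p => {p.1, p.2}) := by
    ext i
    simp only [Finset.mem_biUnion, Finset.mem_insert, Finset.mem_singleton]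
    constructor
    · intro hi
      obtain ⟨p, ⟨hp, hip⟩, _⟩ := h2 i hi
      exact ⟨p, hp, hip⟩
    · rintro ⟨p, hp, hip⟩
      rcases hip with h | h
      · exact h ▸ (h1 p hp).1
      · exact h ▸ (h1 p hp).2.1
  have hdisj : (↑Cs : Set (Fin n × Fin n)).PairwiseDisjoint
      (fun p : Fin n × Fin n => ({p.1, p.2} : Finset (Fin n))) := by
    intro p hp q hq hpq
    rw [Function.onFun, Finset.disjoint_left]
    intro i hip hiq
    have hiC : i ∈ C.erase i0 := by
      rw [hunion]; exact Finset.mem_biUnion.2 ⟨p, hp, hip⟩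
    obtain ⟨r, _, hu⟩ := h2 i hiC
    have hip' : i = p.1 ∨ i = p.2 := by simpa using hip
    have hiq' : i = q.1 ∨ i = q.2 := by simpa using hiq
    exact hpq ((hu p ⟨hp, hip'⟩).trans (hu q ⟨hq, hiq'⟩).symm)
  have hsum : ∑ j ∈ C.erase i0, x j = ∑ p ∈ Cs, (x p.1 + x p.2) := by
    rw [hunion, Finset.sum_biUnion hdisj]
    exact Finset.sum_congr rfl fun p hp => Finset.sum_pair (hne p hp)
  have hxnn : ∀ i, 0 ≤ x i := fun i => by rcases hx i with h | h <;> simp [h]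
  have hle : ∑ j ∈ C.erase i0, x j ≤ (β : ℝ) :=
    le_trans (Finset.sum_le_sum_of_subset_of_nonneg (Finset.erase_subset _ _)
      (fun i _ _ => hxnn i)) hcover
  have hterm : ∀ p ∈ Cs, 2 * (x p.1 * x p.2) ≤ x p.1 + x p.2 := by
    intro p _
    rcases hx p.1 with h | h <;> rcases hx p.2 with h' | h' <;>
      simp [h, h'] <;> norm_num
  have hS2 : 2 * ∑ p ∈ Cs, x p.1 * x p.2 ≤ (β : ℝ) := by
    rw [Finset.mul_sum]
    calc ∑ p ∈ Cs, 2 * (x p.1 * x p.2) ≤ ∑ p ∈ Cs, (x p.1 + x p.2) :=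
          Finset.sum_le_sum hterm
      _ = ∑ j ∈ C.erase i0, x j := hsum.symm
      _ ≤ (β : ℝ) := hle
  have hexists : ∃ m : ℕ, ∑ p ∈ Cs, x p.1 * x p.2 = (m : ℝ) := by
    refine ⟨(Cs.filter (fun p => x p.1 * x p.2 = 1)).card, ?_⟩
    rw [← Finset.sum_filter_add_sum_filter_not Cs (fun p => x p.1 * x p.2 = 1)]
    have hfst : ∑ p ∈ Cs.filter (fun p => x p.1 * x p.2 = 1), x p.1 * x p.2
        = ((Cs.filter (fun p => x p.1 * x p.2 = 1)).card : ℝ) := by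
      rw [Finset.sum_congr rfl (fun p hp => (Finset.mem_filter.1 hp).2),
        Finset.sum_const, nsmul_eq_mul, mul_one]
    have hsnd : ∑ p ∈ Cs.filter (fun p => ¬ x p.1 * x p.2 = 1), x p.1 * x p.2 = 0 := by
      refine Finset.sum_eq_zero fun p hp => ?_
      have hp' := (Finset.mem_filter.1 hp).2
      rcases hx p.1 with h | h <;> rcases hx p.2 with h' | h' <;>
        simp [h, h'] at hp' ⊢
    rw [hfst, hsnd, add_zero]
  obtain ⟨m, hm⟩ := hexists
  obtain ⟨c, hc⟩ := hβodd
  have h2m : 2 * (m : ℤ) ≤ β := by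
    have : 2 * (m : ℝ) ≤ (β : ℝ) := by rw [← hm]; exact hS2
    exact_mod_cast this
  have hmc : (m : ℤ) ≤ c := by omega
  have hmc' : (m : ℝ) ≤ ((β : ℝ) - 1) / 2 := by
    have h1' : ((m : ℤ) : ℝ) ≤ ((c : ℤ) : ℝ) := by exact_mod_cast hmc
    have h2' : (β : ℝ) = 2 * ((c : ℤ) : ℝ) + 1 := by rw [hc]; push_cast; ring
    push_cast at h1' ⊢
    linarith
  calc ∑ p ∈ Cs, (vecMulVec x x) p.1 p.2 = ∑ p ∈ Cs, x p.1 * x p.2 := by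
        simp [vecMulVec_apply]
    _ = (m : ℝ) := hm
    _ ≤ ((β : ℝ) - 1) / 2 := hmc'
end

section
/- Let $N = \{1,\dots,n\}$, $C \subseteq N$ with $|C|$ odd, and let $\beta$ be an even positive integer with $\beta < |C|$. Let $x \in \{0,1\}^n$ satisfy $\sum_{j \in C} x_j \le \beta$ and set $X := xx^T$. Then for every $i_0 \in C$ and every partition $C_s$ of $C \setminus \{i_0\}$ into two-element pairs, the inequality $X_{i_0 i_0} + \sum_{(i,j) \in C_s} X_{ij} \le \beta/2$ holds. -/
open Matrix

/-- SCILS validity, `|C|` odd and `β` even: if the binary vector `x` satisfies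
`∑_{j∈C} x_j ≤ β` with `0 < β < |C|`, `|C|` odd, `β` even, and `X := x xᵀ`, then for every
`i₀ ∈ C` and every partition `Cs` of `C \ {i₀}` into pairs,
`X_{i₀i₀} + ∑_{(i,j)∈Cs} X_{ij} ≤ β/2`. -/
theorem scils_valid_odd_card_even_beta (n : ℕ) (C : Finset (Fin n)) (hCodd : Odd C.card)
    (β : ℤ) (hβ0 : 0 < β) (hβeven : Even β) (hβC : β < (C.card : ℤ))
    (x : Fin n → ℝ) (hx : ∀ i, x i = 0 ∨ x i = 1)
    (hcover : ∑ j ∈ C, x j ≤ (β : ℝ))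
    (i0 : Fin n) (hi0 : i0 ∈ C)
    (Cs : Finset (Fin n × Fin n)) (hCs : IsPairPartition (C.erase i0) Cs) :
    (vecMulVec x x) i0 i0 + ∑ p ∈ Cs, (vecMulVec x x) p.1 p.2 ≤ (β : ℝ) / 2 := by
  classical
  obtain ⟨hmem, huniq⟩ := hCs
  set S := C.filter (fun j => x j = 1) with hSdef
  set T := Cs.filter (fun p => x p.1 = 1 ∧ x p.2 = 1) with hTdef
  have hsum1 : ∑ j ∈ C, x j = (S.card : ℝ) := by
    rw [hSdef, ← Finset.sum_boole]
    refine Finset.sum_congr rfl fun j _ => ?_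
    rcases hx j with h | h <;> simp [h]
  have hScard : (S.card : ℤ) ≤ β := by
    have : (S.card : ℝ) ≤ (β : ℝ) := hsum1 ▸ hcover
    exact_mod_cast this
  have hsum2 : ∑ p ∈ Cs, x p.1 * x p.2 = (T.card : ℝ) := by
    rw [hTdef, ← Finset.sum_boole]
    refine Finset.sum_congr rfl fun p _ => ?_
    rcases hx p.1 with h1 | h1 <;> rcases hx p.2 with h2 | h2 <;> simp [h1, h2]
  -- disjointness of the pair sets
  have hdisj : ∀ p ∈ T, ∀ q ∈ T, p ≠ q →
      Disjoint ({p.1, p.2} : Finset (Fin n)) {q.1, q.2} := by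
    intro p hp q hq hpq
    have hpCs : p ∈ Cs := Finset.mem_of_mem_filter _ hp
    have hqCs : q ∈ Cs := Finset.mem_of_mem_filter _ hq
    rw [Finset.disjoint_left]
    intro a hap haq
    have hap' : a = p.1 ∨ a = p.2 := by simpa using hap
    have haq' : a = q.1 ∨ a = q.2 := by simpa using haq
    have haC : a ∈ C.erase i0 := by
      obtain ⟨h1, h2, _⟩ := hmem p hpCs
      rcases hap' with rfl | rfl <;> assumption
    obtain ⟨r, _, hr⟩ := huniq a haC
    exact hpq ((hr p ⟨hpCs, hap'⟩).trans (hr q ⟨hqCs, haq'⟩).symm)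
  have hsub : T.biUnion (fun p => ({p.1, p.2} : Finset (Fin n))) ⊆ S.erase i0 := by
    intro a ha
    obtain ⟨p, hp, hap⟩ := Finset.mem_biUnion.mp ha
    have hpCs : p ∈ Cs := Finset.mem_of_mem_filter _ hp
    have hx1 : x p.1 = 1 ∧ x p.2 = 1 := (Finset.mem_filter.mp hp).2
    obtain ⟨h1, h2, _⟩ := hmem p hpCs
    have hap' : a = p.1 ∨ a = p.2 := by simpa using hap
    rcases hap' with rfl | rfl
    · exact Finset.mem_erase.mpr ⟨(Finset.mem_erase.mp h1).1,
        Finset.mem_filter.mpr ⟨(Finset.mem_erase.mp h1).2, hx1.1⟩⟩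
    · exact Finset.mem_erase.mpr ⟨(Finset.mem_erase.mp h2).1,
        Finset.mem_filter.mpr ⟨(Finset.mem_erase.mp h2).2, hx1.2⟩⟩
  have hcardbi : (T.biUnion (fun p => ({p.1, p.2} : Finset (Fin n)))).card = 2 * T.card := by
    rw [Finset.card_biUnion hdisj]
    rw [Finset.sum_congr rfl (fun p hp => ?_), Finset.sum_const, smul_eq_mul, mul_comm]
    have hpCs : p ∈ Cs := Finset.mem_of_mem_filter _ hp
    obtain ⟨_, _, hlt⟩ := hmem p hpCs
    rw [Finset.card_insert_of_notMem (by simp [hlt.ne]), Finset.card_singleton]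
  have hkey : 2 * T.card ≤ (S.erase i0).card := hcardbi ▸ Finset.card_le_card hsub
  -- now the arithmetic
  simp only [vecMulVec_apply]
  rw [hsum2]
  rcases hx i0 with h0 | h0
  · have h2 : (2 * T.card : ℤ) ≤ β := by
      calc (2 * T.card : ℤ) ≤ ((S.erase i0).card : ℤ) := by exact_mod_cast hkey
        _ ≤ (S.card : ℤ) := by exact_mod_cast Finset.card_le_card (Finset.erase_subset _ _)
        _ ≤ β := hScard
    have h2' : (2 * (T.card : ℝ)) ≤ (β : ℝ) := by exact_mod_cast h2
    rw [h0]
    linarith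
  · have hi0S : i0 ∈ S := Finset.mem_filter.mpr ⟨hi0, h0⟩
    have herase : (S.erase i0).card = S.card - 1 := Finset.card_erase_of_mem hi0S
    have hSpos : 1 ≤ S.card := Finset.card_pos.mpr ⟨i0, hi0S⟩
    obtain ⟨b, hb⟩ := hβeven
    have h2 : (2 * T.card : ℤ) + 2 ≤ β := by
      have h1 : (2 * T.card : ℤ) ≤ (S.card : ℤ) - 1 := by
        have := hkey.trans_eq herase
        omega
      omega
    have h2' : (2 * (T.card : ℝ)) + 2 ≤ (β : ℝ) := by exact_mod_cast h2
    rw [h0]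
    linarith
end

section
/- Let $N = \{1,\dots,n\}$, let $\alpha \in \mathbb{Z}_{\ge 0}^n$, $\beta \in \mathbb{Z}_{\ge 0}$, and let $x \in \{0,1\}^n$ satisfy the knapsack inequality $\sum_{j \in N} \alpha_j x_j \le \beta$. Set $X := xx^T$. Let $M$ be a collection of pairwise disjoint two-element pairs $(i,j)$, $i<j$, of indices in $N$ with $\alpha_i = \alpha_j$ for each pair, and let $S \subseteq N$ be a set of indices disjoint from all pairs in $M$. Then the knapsack inequality in the lifted space (SKILS) holds: $\sum_{i \in S} \alpha_i X_{ii} + 2\sum_{(i,j) \in M} \alpha_i X_{ij} \le \beta$. -/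
open Matrix

/-- Validity of the knapsack inequality in the lifted space (SKILS): if the binary vector
`x` satisfies `∑_j α_j x_j ≤ β` with `α ≥ 0`, `β ≥ 0`, `X := x xᵀ`, `M` is a collection of
pairwise disjoint pairs `(i,j)`, `i < j`, with `α_i = α_j` on each pair, and `S` is a set of
indices disjoint from all pairs of `M`, then
`∑_{i∈S} α_i X_{ii} + 2 ∑_{(i,j)∈M} α_i X_{ij} ≤ β`. -/
theorem skils_valid (n : ℕ) (α : Fin n → ℤ) (hα : ∀ j, 0 ≤ α j) (β : ℤ) (hβ : 0 ≤ β)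
    (x : Fin n → ℝ) (hx : ∀ i, x i = 0 ∨ x i = 1)
    (hknap : ∑ j, (α j : ℝ) * x j ≤ (β : ℝ))
    (M : Finset (Fin n × Fin n))
    (hM : ∀ p ∈ M, p.1 < p.2 ∧ α p.1 = α p.2)
    (hMdisj : ∀ p ∈ M, ∀ q ∈ M, p ≠ q →
      p.1 ≠ q.1 ∧ p.1 ≠ q.2 ∧ p.2 ≠ q.1 ∧ p.2 ≠ q.2)
    (S : Finset (Fin n)) (hS : ∀ i ∈ S, ∀ p ∈ M, i ≠ p.1 ∧ i ≠ p.2) :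
    ∑ i ∈ S, (α i : ℝ) * (vecMulVec x x) i i
      + 2 * ∑ p ∈ M, (α p.1 : ℝ) * (vecMulVec x x) p.1 p.2 ≤ (β : ℝ) := by
  set f : Fin n → ℝ := fun j => (α j : ℝ) * x j with hf
  have hxnn : ∀ i, 0 ≤ x i := fun i => by rcases hx i with h | h <;> simp [h]
  have hfnn : ∀ i, 0 ≤ f i := fun i =>
    mul_nonneg (by exact_mod_cast hα i) (hxnn i)
  -- diagonal terms
  have hdiag : ∀ i, (α i : ℝ) * (vecMulVec x x) i i = f i := by
    intro i; rcases hx i with h | h <;> simp [hf, vecMulVec_apply, h]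
  -- pair terms
  have hpair : ∀ p ∈ M, 2 * ((α p.1 : ℝ) * (vecMulVec x x) p.1 p.2)
      ≤ f p.1 + f p.2 := by
    intro p hp
    have hαeq : (α p.1 : ℝ) = (α p.2 : ℝ) := by exact_mod_cast (hM p hp).2
    have h1 := hα p.1
    have h1' : (0:ℝ) ≤ (α p.1 : ℝ) := by exact_mod_cast h1
    rcases hx p.1 with h1 | h1 <;> rcases hx p.2 with h2 | h2 <;>
      simp only [hf, vecMulVec_apply, h1, h2, mul_zero, mul_one, zero_mul] <;>
      nlinarith [hαeq, h1']
  -- step 1: bound the LHS by sums of f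
  have step1 : ∑ i ∈ S, (α i : ℝ) * (vecMulVec x x) i i
      + 2 * ∑ p ∈ M, (α p.1 : ℝ) * (vecMulVec x x) p.1 p.2
      ≤ ∑ i ∈ S, f i + ∑ p ∈ M, (f p.1 + f p.2) := by
    gcongr ?_ + ?_
    · exact le_of_eq (Finset.sum_congr rfl fun i _ => hdiag i)
    · rw [Finset.mul_sum]
      exact Finset.sum_le_sum hpair
  -- images of fst and snd
  set A : Finset (Fin n) := M.image Prod.fst with hA
  set B : Finset (Fin n) := M.image Prod.snd with hB
  have hsumA : ∑ p ∈ M, f p.1 = ∑ i ∈ A, f i := by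
    rw [hA, Finset.sum_image]
    intro p hp q hq h
    by_contra hne
    exact (hMdisj p hp q hq hne).1 h
  have hsumB : ∑ p ∈ M, f p.2 = ∑ i ∈ B, f i := by
    rw [hB, Finset.sum_image]
    intro p hp q hq h
    by_contra hne
    exact (hMdisj p hp q hq hne).2.2.2 h
  have hdSA : Disjoint S A := by
    rw [Finset.disjoint_left]
    intro i hiS hiA
    obtain ⟨p, hp, hpi⟩ := Finset.mem_image.mp hiA
    exact (hS i hiS p hp).1 hpi.symm
  have hdSB : Disjoint S B := by
    rw [Finset.disjoint_left]
    intro i hiS hiB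
    obtain ⟨p, hp, hpi⟩ := Finset.mem_image.mp hiB
    exact (hS i hiS p hp).2 hpi.symm
  have hdAB : Disjoint A B := by
    rw [Finset.disjoint_left]
    intro i hiA hiB
    obtain ⟨p, hp, hpi⟩ := Finset.mem_image.mp hiA
    obtain ⟨q, hq, hqi⟩ := Finset.mem_image.mp hiB
    by_cases hpq : p = q
    · subst hpq
      exact absurd (hpi.trans hqi.symm) (ne_of_lt (hM p hp).1)
    · exact (hMdisj p hp q hq hpq).2.1 (hpi.trans hqi.symm)
  have step2 : ∑ i ∈ S, f i + ∑ p ∈ M, (f p.1 + f p.2)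
      = ∑ i ∈ S ∪ A ∪ B, f i := by
    rw [Finset.sum_add_distrib, hsumA, hsumB,
      Finset.sum_union (Finset.disjoint_union_left.mpr ⟨hdSB, hdAB⟩),
      Finset.sum_union hdSA, add_assoc]
  have step3 : ∑ i ∈ S ∪ A ∪ B, f i ≤ ∑ j, f j :=
    Finset.sum_le_sum_of_subset_of_nonneg (Finset.subset_univ _)
      (fun i _ _ => hfnn i)
  calc ∑ i ∈ S, (α i : ℝ) * (vecMulVec x x) i i
      + 2 * ∑ p ∈ M, (α p.1 : ℝ) * (vecMulVec x x) p.1 p.2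
      ≤ ∑ i ∈ S, f i + ∑ p ∈ M, (f p.1 + f p.2) := step1
    _ = ∑ i ∈ S ∪ A ∪ B, f i := step2
    _ ≤ ∑ j, f j := step3
    _ ≤ (β : ℝ) := hknap
end

section
/- Let $N = \{1,\dots,n\}$, let $\alpha \in \mathbb{Z}_{\ge 0}^n$, $\beta \in \mathbb{Z}_{\ge 0}$, and let $x \in \{0,1\}^n$ satisfy $\sum_{j \in N} \alpha_j x_j \le \beta$. Set $X := xx^T$. Let $M$ be a collection of pairwise disjoint two-element pairs $(i,j)$, $i<j$, with $\alpha_i = \alpha_j$ for each pair, and let $S \subseteq N$ be disjoint from all pairs in $M$. If moreover $\alpha_i$ is even for every $i \in S$, then the strengthened SKILS inequality holds: $\sum_{i \in S} \alpha_i X_{ii} + 2\sum_{(i,j) \in M} \alpha_i X_{ij} \le 2\lfloor \beta/2 \rfloor$. -/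
open Matrix

/-- Strengthened SKILS: under the hypotheses of SKILS validity, if moreover every singleton
coefficient `α_i`, `i ∈ S`, is even, then the right-hand side `β` can be strengthened to
`2⌊β/2⌋`:  `∑_{i∈S} α_i X_{ii} + 2 ∑_{(i,j)∈M} α_i X_{ij} ≤ 2⌊β/2⌋`. -/
theorem skils_valid_strengthened (n : ℕ) (α : Fin n → ℤ) (hα : ∀ j, 0 ≤ α j)
    (β : ℤ) (hβ : 0 ≤ β)
    (x : Fin n → ℝ) (hx : ∀ i, x i = 0 ∨ x i = 1)
    (hknap : ∑ j, (α j : ℝ) * x j ≤ (β : ℝ))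
    (M : Finset (Fin n × Fin n))
    (hM : ∀ p ∈ M, p.1 < p.2 ∧ α p.1 = α p.2)
    (hMdisj : ∀ p ∈ M, ∀ q ∈ M, p ≠ q →
      p.1 ≠ q.1 ∧ p.1 ≠ q.2 ∧ p.2 ≠ q.1 ∧ p.2 ≠ q.2)
    (S : Finset (Fin n)) (hS : ∀ i ∈ S, ∀ p ∈ M, i ≠ p.1 ∧ i ≠ p.2)
    (hSeven : ∀ i ∈ S, Even (α i)) :
    ∑ i ∈ S, (α i : ℝ) * (vecMulVec x x) i i
      + 2 * ∑ p ∈ M, (α p.1 : ℝ) * (vecMulVec x x) p.1 p.2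
      ≤ 2 * ((β / 2 : ℤ) : ℝ) := by
  classical
  -- integer 0/1 vector
  set b : Fin n → ℤ := fun i => if x i = 0 then 0 else 1 with hbdef
  have hxb : ∀ i, x i = (b i : ℝ) := by
    intro i; rcases hx i with h | h <;> simp [hbdef, h]
  have hb01 : ∀ i, b i = 0 ∨ b i = 1 := by
    intro i; rcases hx i with h | h <;> simp [hbdef, h]
  set F : Fin n → ℤ := fun j => α j * b j with hFdef
  have hF0 : ∀ j, 0 ≤ F j := by
    intro j
    rcases hb01 j with h | h <;> simp [hFdef, h, hα j]
  set L : ℤ := ∑ i ∈ S, α i * (b i * b i) + 2 * ∑ p ∈ M, α p.1 * (b p.1 * b p.2)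
    with hLdef
  -- L is even
  have hLeven : Even L := by
    apply Even.add
    · apply Finset.even_sum
      intro i hi
      exact (hSeven i hi).mul_right _
    · exact even_two_mul _
  -- pairwise bound
  have pair_le : ∀ p ∈ M, 2 * (α p.1 * (b p.1 * b p.2)) ≤ F p.1 + F p.2 := by
    intro p hp
    obtain ⟨-, hαeq⟩ := hM p hp
    rcases hb01 p.1 with h1 | h1 <;> rcases hb01 p.2 with h2 | h2 <;>
      simp [hFdef, h1, h2, ← hαeq, hα p.1, two_mul]
  -- injectivity of fst and snd on M
  have hfstinj : Set.InjOn Prod.fst (M : Set (Fin n × Fin n)) := by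
    intro p hp q hq h
    by_contra hne
    exact (hMdisj p hp q hq hne).1 h
  have hsndinj : Set.InjOn Prod.snd (M : Set (Fin n × Fin n)) := by
    intro p hp q hq h
    by_contra hne
    exact (hMdisj p hp q hq hne).2.2.2 h
  -- main bound L ≤ ∑ F
  have hLF : L ≤ ∑ j, F j := by
    have hbb : ∀ i, b i * b i = b i := by
      intro i; rcases hb01 i with h | h <;> simp [h]
    have h1 : L ≤ ∑ i ∈ S, F i + ∑ p ∈ M, (F p.1 + F p.2) := by
      rw [hLdef, Finset.mul_sum]
      apply add_le_add
      · refine le_of_eq (Finset.sum_congr rfl fun i _ => ?_)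
        simp [hFdef, hbb i]
      · exact Finset.sum_le_sum pair_le
    have h2 : ∑ p ∈ M, (F p.1 + F p.2)
        = ∑ i ∈ M.image Prod.fst, F i + ∑ i ∈ M.image Prod.snd, F i := by
      rw [Finset.sum_add_distrib, Finset.sum_image (fun p hp q hq => hfstinj hp hq),
        Finset.sum_image (fun p hp q hq => hsndinj hp hq)]
    have hd1 : Disjoint (M.image Prod.fst) (M.image Prod.snd) := by
      rw [Finset.disjoint_left]
      intro i hi1 hi2
      obtain ⟨p, hp, hpe⟩ := Finset.mem_image.mp hi1
      obtain ⟨q, hq, hqe⟩ := Finset.mem_image.mp hi2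
      by_cases hpq : p = q
      · subst hpq
        exact absurd (hpe.trans hqe.symm) (ne_of_lt (hM p hp).1)
      · exact (hMdisj p hp q hq hpq).2.1 (hpe.trans hqe.symm)
    have hd2 : Disjoint S (M.image Prod.fst ∪ M.image Prod.snd) := by
      rw [Finset.disjoint_left]
      intro i hiS hi
      rcases Finset.mem_union.mp hi with h | h
      · obtain ⟨p, hp, hpe⟩ := Finset.mem_image.mp h
        exact (hS i hiS p hp).1 hpe.symm
      · obtain ⟨p, hp, hpe⟩ := Finset.mem_image.mp h
        exact (hS i hiS p hp).2 hpe.symm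
    calc L ≤ ∑ i ∈ S, F i + ∑ p ∈ M, (F p.1 + F p.2) := h1
      _ = ∑ i ∈ S ∪ (M.image Prod.fst ∪ M.image Prod.snd), F i := by
          rw [h2, Finset.sum_union hd2, Finset.sum_union hd1]
      _ ≤ ∑ j, F j := Finset.sum_le_sum_of_subset_of_nonneg
          (Finset.subset_univ _) (fun j _ _ => hF0 j)
  -- ∑ F ≤ β
  have hFβ : ∑ j, F j ≤ β := by
    have : ((∑ j, F j : ℤ) : ℝ) ≤ (β : ℝ) := by
      simp only [hFdef]
      push_cast
      calc (∑ j, (α j : ℝ) * (b j : ℝ)) = ∑ j, (α j : ℝ) * x j := by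
            refine Finset.sum_congr rfl fun j _ => ?_
            rw [hxb j]
        _ ≤ (β : ℝ) := hknap
    exact_mod_cast this
  have hLβ : L ≤ 2 * (β / 2) := by
    obtain ⟨k, hk⟩ := hLeven
    have := hLF.trans hFβ
    omega
  -- conclude in ℝ
  have key : (∑ i ∈ S, (α i : ℝ) * (vecMulVec x x) i i
      + 2 * ∑ p ∈ M, (α p.1 : ℝ) * (vecMulVec x x) p.1 p.2) = (L : ℝ) := by
    rw [hLdef]
    push_cast
    refine congrArg₂ (· + ·) ?_ ?_
    · refine Finset.sum_congr rfl fun i _ => ?_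
      rw [vecMulVec_apply, hxb i]
    · rw [mul_right_inj' (two_ne_zero)]
      refine Finset.sum_congr rfl fun p _ => ?_
      rw [vecMulVec_apply, hxb p.1, hxb p.2]
  rw [key]
  calc (L : ℝ) ≤ ((2 * (β / 2) : ℤ) : ℝ) := by exact_mod_cast hLβ
    _ = 2 * ((β / 2 : ℤ) : ℝ) := by push_cast; ring
end

section
/- Let $C$ be a finite index set with $\gamma := |C|$ even, $\gamma \ge 2$, and let $\beta = \gamma - 1$. Let $X$ be a real symmetric matrix (indexed by a set containing $C$). If for every partition $C_s$ of $C$ into two-element pairs the SCILS inequality $\sum_{\{i,j\} \in C_s} X_{ij} \le \lfloor \beta/2 \rfloor = (\gamma-2)/2$ holds, then the CILS inequality $\sum_{i,j \in C,\ i<j} X_{ij} \le \binom{\beta}{2} = (\gamma-1)(\gamma-2)/2$ holds. That is, when $\beta = |C| - 1$ and $|C|$ is even, the set of inequalities SCILS dominates CILS (the sum of all inequalities in SCILS is equivalent to CILS). -/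
open Matrix

open Finset

section Aux
variable {α : Type*} [DecidableEq α] [Fintype α]

omit [Fintype α] in
lemma exists_perm_pair (a b c d : α) (hab : a ≠ b) (hcd : c ≠ d) :
    ∃ τ : Equiv.Perm α, τ a = c ∧ τ b = d := by
  refine ⟨(Equiv.swap d ((Equiv.swap c a) b)) * (Equiv.swap c a), ?_, ?_⟩
  · have h1 : (Equiv.swap c a) a = c := Equiv.swap_apply_right c a
    have hb' : (Equiv.swap c a) b ≠ c := by
      intro hh
      exact hab ((Equiv.swap c a).injective (by rw [hh, h1])).symm
    simp only [Equiv.Perm.mul_apply, h1]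
    exact Equiv.swap_apply_of_ne_of_ne hcd (Ne.symm hb')
  · simp [Equiv.Perm.mul_apply]

lemma fiber_card_eq (a b i j c d k l : α)
    (hab : a ≠ b) (hij : i ≠ j) (hcd : c ≠ d) (hkl : k ≠ l) :
    (univ.filter fun σ : Equiv.Perm α => σ a = i ∧ σ b = j).card
      = (univ.filter fun σ : Equiv.Perm α => σ c = k ∧ σ d = l).card := by
  obtain ⟨ρ, hρ1, hρ2⟩ := exists_perm_pair c d a b hcd hab
  obtain ⟨τ, hτ1, hτ2⟩ := exists_perm_pair i j k l hij hkl
  apply Finset.card_bij' (fun σ _ => τ * σ * ρ) (fun σ _ => τ⁻¹ * σ * ρ⁻¹)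
  · intro σ hσ
    simp only [mem_filter, mem_univ, true_and] at hσ ⊢
    simp [Equiv.Perm.mul_apply, hρ1, hρ2, hσ.1, hσ.2, hτ1, hτ2]
  · intro σ hσ
    simp only [mem_filter, mem_univ, true_and] at hσ ⊢
    constructor
    · have : ρ⁻¹ a = c := by rw [← hρ1]; simp
      simp [Equiv.Perm.mul_apply, this, hσ.1, ← hτ1]
    · have : ρ⁻¹ b = d := by rw [← hρ2]; simp
      simp [Equiv.Perm.mul_apply, this, hσ.2, ← hτ2]
  · intro σ _; group
  · intro σ _; group

lemma sum_perm_pair (f : α → α → ℝ) (a b c d : α) (hab : a ≠ b) (hcd : c ≠ d) :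
    ∑ σ : Equiv.Perm α, f (σ a) (σ b)
      = ∑ p ∈ (univ : Finset α).offDiag,
          ((univ.filter fun σ : Equiv.Perm α => σ c = c ∧ σ d = d).card : ℝ) * f p.1 p.2 := by
  rw [Finset.sum_comp (fun p : α × α => f p.1 p.2) (fun σ : Equiv.Perm α => (σ a, σ b))]
  have himg : (univ : Finset (Equiv.Perm α)).image (fun σ => (σ a, σ b))
      = (univ : Finset α).offDiag := by
    ext p
    simp only [mem_image, mem_univ, true_and, Finset.mem_offDiag]
    constructor
    · rintro ⟨σ, rfl⟩
      exact fun hh => hab (σ.injective hh)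
    · intro hp
      obtain ⟨σ, h1, h2⟩ := exists_perm_pair a b p.1 p.2 hab hp
      exact ⟨σ, by simp [h1, h2]⟩
  rw [himg]
  refine Finset.sum_congr rfl fun p hp => ?_
  rw [Finset.mem_offDiag] at hp
  have : (univ.filter fun σ : Equiv.Perm α => (σ a, σ b) = p)
      = (univ.filter fun σ : Equiv.Perm α => σ a = p.1 ∧ σ b = p.2) := by
    apply Finset.filter_congr; intro σ _; simp [Prod.ext_iff]
  rw [this, fiber_card_eq a b p.1 p.2 c d c d hab hp.2.2 hcd hcd, nsmul_eq_mul]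

lemma card_perm_eq (c d : α) (hcd : c ≠ d) :
    Fintype.card (Equiv.Perm α)
      = (univ : Finset α).offDiag.card
        * (univ.filter fun σ : Equiv.Perm α => σ c = c ∧ σ d = d).card := by
  have := Finset.card_eq_sum_card_fiberwise
    (f := fun σ : Equiv.Perm α => (σ c, σ d)) (s := univ) (t := (univ : Finset α).offDiag)
    (fun σ _ => by
      simp only [Finset.mem_coe, Finset.mem_offDiag, mem_univ, true_and]
      exact fun hh => hcd (σ.injective hh))
  rw [← Finset.card_univ, this]
  rw [Finset.sum_congr rfl (fun p hp => ?_), Finset.sum_const, smul_eq_mul]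
  rw [Finset.mem_offDiag] at hp
  have heq : (univ.filter fun σ : Equiv.Perm α => (σ c, σ d) = p)
      = (univ.filter fun σ : Equiv.Perm α => σ c = p.1 ∧ σ d = p.2) := by
    apply Finset.filter_congr; intro σ _; simp [Prod.ext_iff]
  rw [heq]
  exact fiber_card_eq c d p.1 p.2 c d c d hcd hp.2.2 hcd hcd
end Aux

/-- When `γ := |C|` is even and `β = γ - 1`, the set of SCILS inequalities dominates CILS:
if a symmetric `X` satisfies `∑_{(i,j)∈Cs} X_{ij} ≤ ⌊β/2⌋ = (γ-2)/2` for every pair-partition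
`Cs` of `C`, then `∑_{i,j∈C, i<j} X_{ij} ≤ C(β,2) = (γ-1)(γ-2)/2`. -/
theorem scils_dominates_cils_beta_eq_card_sub_one (n : ℕ) (C : Finset (Fin n))
    (hC2 : 2 ≤ C.card) (hCeven : Even C.card)
    (X : Matrix (Fin n) (Fin n) ℝ) (hX : X.IsSymm)
    (h : ∀ Cs : Finset (Fin n × Fin n), IsPairPartition C Cs →
      ∑ p ∈ Cs, X p.1 p.2 ≤ ((C.card : ℝ) - 2) / 2) :
    ∑ i ∈ C, ∑ j ∈ C.filter (fun j => i < j), X i j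
      ≤ ((C.card : ℝ) - 1) * ((C.card : ℝ) - 2) / 2 := by
  classical
  obtain ⟨m, hm⟩ := hCeven
  have hm2 : C.card = 2 * m := by omega
  have hm1 : 1 ≤ m := by omega
  set α := {x : Fin n // x ∈ C} with hα
  let o : Fin (2 * m) ≃ α := (finCongr hm2.symm).trans (C.orderIsoOfFin rfl).toEquiv
  let i1 : Fin m → Fin (2 * m) := fun k => ⟨2 * k, by have := k.isLt; omega⟩
  let i2 : Fin m → Fin (2 * m) := fun k => ⟨2 * k + 1, by have := k.isLt; omega⟩
  have hi12 : ∀ k, i1 k ≠ i2 k := by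
    intro k hk
    have := congrArg Fin.val hk
    simp only [i1, i2] at this
    omega
  let sp : Fin n × Fin n → Fin n × Fin n := fun p => if p.1 < p.2 then p else (p.2, p.1)
  let edge : Equiv.Perm α → Fin m → Fin n × Fin n :=
    fun σ k => sp (↑(σ (o (i1 k))), ↑(σ (o (i2 k))))
  let Ms : Equiv.Perm α → Finset (Fin n × Fin n) :=
    fun σ => (univ : Finset (Fin m)).image (edge σ)
  have hne : ∀ (σ : Equiv.Perm α) (k : Fin m),
      (↑(σ (o (i1 k))) : Fin n) ≠ ↑(σ (o (i2 k))) := by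
    intro σ k hk
    exact hi12 k (o.injective (σ.injective (Subtype.coe_injective hk)))
  -- characterization of components of an edge
  have hcomp : ∀ (σ : Equiv.Perm α) (k : Fin m) (x : Fin n),
      (x = (edge σ k).1 ∨ x = (edge σ k).2)
        ↔ (x = ↑(σ (o (i1 k))) ∨ x = ↑(σ (o (i2 k)))) := by
    intro σ k x
    simp only [edge, sp]
    split <;> simp <;> tauto
  have hlt : ∀ (σ : Equiv.Perm α) (k : Fin m), (edge σ k).1 < (edge σ k).2 := by
    intro σ k
    simp only [edge, sp]
    split
    · assumption
    · rename_i hh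
      exact lt_of_le_of_ne (not_lt.mp hh) (Ne.symm (hne σ k))
  have hmemC : ∀ (σ : Equiv.Perm α) (k : Fin m),
      (edge σ k).1 ∈ C ∧ (edge σ k).2 ∈ C := by
    intro σ k
    simp only [edge, sp]
    split <;> exact ⟨Subtype.coe_prop _, Subtype.coe_prop _⟩
  -- each element of C sits in a unique edge
  have hpart : ∀ σ : Equiv.Perm α, IsPairPartition C (Ms σ) := by
    intro σ
    constructor
    · intro p hp
      obtain ⟨k, -, rfl⟩ := Finset.mem_image.mp hp
      exact ⟨(hmemC σ k).1, (hmemC σ k).2, hlt σ k⟩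
    · intro i hi
      set x : α := ⟨i, hi⟩ with hx
      set t : Fin (2 * m) := o.symm (σ.symm x) with ht
      have hxt : σ (o t) = x := by simp [ht]
      refine ⟨edge σ ⟨t / 2, by have := t.isLt; omega⟩, ⟨Finset.mem_image_of_mem _ (mem_univ _), ?_⟩, ?_⟩
      · rw [hcomp]
        have : (t : ℕ) = 2 * ((t : ℕ) / 2) ∨ (t : ℕ) = 2 * ((t : ℕ) / 2) + 1 := by omega
        rcases this with hh | hh
        · left
          have : i1 ⟨t / 2, by have := t.isLt; omega⟩ = t := by
            apply Fin.ext; simp [i1]; omega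
          rw [this, hxt]
        · right
          have : i2 ⟨t / 2, by have := t.isLt; omega⟩ = t := by
            apply Fin.ext; simp [i2]; omega
          rw [this, hxt]
      · rintro p ⟨hp, hip⟩
        obtain ⟨k', -, rfl⟩ := Finset.mem_image.mp hp
        rw [hcomp] at hip
        have hk' : k' = ⟨t / 2, by have := t.isLt; omega⟩ := by
          rcases hip with hh | hh
          · have : σ (o (i1 k')) = x := Subtype.coe_injective hh.symm
            have h2 : i1 k' = t := by rw [ht]; rw [← this]; simp
            have h3 : (2 : ℕ) * k' = (t : ℕ) := congrArg Fin.val h2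
            apply Fin.ext; simp; omega
          · have : σ (o (i2 k')) = x := Subtype.coe_injective hh.symm
            have h2 : i2 k' = t := by rw [ht]; rw [← this]; simp
            have h3 : (2 : ℕ) * k' + 1 = (t : ℕ) := congrArg Fin.val h2
            apply Fin.ext; simp; omega
        rw [hk']
  -- the sum over an edge set
  have hXsp : ∀ (σ : Equiv.Perm α) (k : Fin m),
      X (edge σ k).1 (edge σ k).2 = X ↑(σ (o (i1 k))) ↑(σ (o (i2 k))) := by
    intro σ k
    simp only [edge, sp]
    split
    · rfl
    · exact (hX.apply _ _)
  have hinj : ∀ σ : Equiv.Perm α, ∀ k ∈ (univ : Finset (Fin m)), ∀ k' ∈ univ,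
      edge σ k = edge σ k' → k = k' := by
    intro σ k _ k' _ hkk
    have h1 : (↑(σ (o (i1 k))) : Fin n) = (edge σ k).1 ∨ (↑(σ (o (i1 k))) : Fin n) = (edge σ k).2 := by
      rw [hcomp]; left; rfl
    rw [hkk, hcomp] at h1
    rcases h1 with hh | hh
    · have : i1 k = i1 k' := o.injective (σ.injective (Subtype.coe_injective hh))
      have := congrArg Fin.val this
      simp only [i1] at this
      apply Fin.ext; omega
    · have : i1 k = i2 k' := o.injective (σ.injective (Subtype.coe_injective hh))
      have := congrArg Fin.val this
      simp only [i1, i2] at this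
      omega
  have hsum : ∀ σ : Equiv.Perm α,
      ∑ p ∈ Ms σ, X p.1 p.2 = ∑ k : Fin m, X ↑(σ (o (i1 k))) ↑(σ (o (i2 k))) := by
    intro σ
    rw [Finset.sum_image (hinj σ)]
    exact Finset.sum_congr rfl fun k _ => hXsp σ k
  -- each σ yields an SCILS inequality
  have hb : ∀ σ : Equiv.Perm α,
      ∑ k : Fin m, X ↑(σ (o (i1 k))) ↑(σ (o (i2 k))) ≤ ((C.card : ℝ) - 2) / 2 := by
    intro σ
    rw [← hsum σ]
    exact h (Ms σ) (hpart σ)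
  set k0 : Fin m := ⟨0, hm1⟩ with hk0
  set c : α := o (i1 k0) with hc
  set d : α := o (i2 k0) with hd
  have hcd : c ≠ d := fun hh => hi12 k0 (o.injective hh)
  set N : ℕ := (univ.filter fun σ : Equiv.Perm α => σ c = c ∧ σ d = d).card with hN
  have hab : ∀ k : Fin m, o (i1 k) ≠ o (i2 k) := fun k hh => hi12 k (o.injective hh)
  set T : ℝ := ∑ p ∈ (univ : Finset α).offDiag, X ↑p.1 ↑p.2 with hT
  set S : ℝ := ∑ i ∈ C, ∑ j ∈ C.filter (fun j => i < j), X i j with hS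
  have hswap : ∑ σ : Equiv.Perm α, ∑ k : Fin m, X ↑(σ (o (i1 k))) ↑(σ (o (i2 k)))
      = (m : ℝ) * ((N : ℝ) * T) := by
    rw [Finset.sum_comm]
    have hk : ∀ k : Fin m,
        ∑ σ : Equiv.Perm α, X ↑(σ (o (i1 k))) ↑(σ (o (i2 k))) = (N : ℝ) * T := by
      intro k
      rw [sum_perm_pair (fun x y : α => (X ↑x ↑y : ℝ)) _ _ c d (hab k) hcd]
      rw [hT, Finset.mul_sum]
    rw [Finset.sum_congr rfl (fun k _ => hk k), Finset.sum_const, card_univ,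
      Fintype.card_fin, nsmul_eq_mul]
  have hcards : Fintype.card (Equiv.Perm α) = 2 * m * (2 * m - 1) * N := by
    rw [card_perm_eq c d hcd, Finset.offDiag_card, card_univ]
    have hcardα : Fintype.card α = 2 * m := by
      have hcc : Fintype.card α = C.card := Fintype.card_coe C
      omega
    rw [hcardα]
    congr 1
    have h1 : 1 ≤ 2 * m := by omega
    have h2 : 2 * m ≤ 2 * m * (2 * m) := Nat.le_mul_of_pos_right _ (by omega)
    zify [h1, h2]
    ring
  have hN1 : 1 ≤ N := by
    rw [hN]
    exact Finset.card_pos.mpr ⟨1, by simp⟩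
  have htot : (m : ℝ) * ((N : ℝ) * T)
      ≤ (Fintype.card (Equiv.Perm α) : ℝ) * (((C.card : ℝ) - 2) / 2) := by
    rw [← hswap]
    calc ∑ σ : Equiv.Perm α, ∑ k : Fin m, X ↑(σ (o (i1 k))) ↑(σ (o (i2 k)))
        ≤ ∑ _σ : Equiv.Perm α, ((C.card : ℝ) - 2) / 2 :=
          Finset.sum_le_sum (fun σ _ => hb σ)
      _ = (Fintype.card (Equiv.Perm α) : ℝ) * (((C.card : ℝ) - 2) / 2) := by
          rw [Finset.sum_const, card_univ, nsmul_eq_mul]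
  -- T = 2 * S
  have hT2 : T = 2 * S := by
    have hoff : (univ : Finset α).offDiag
        = ((univ : Finset α) ×ˢ (univ : Finset α)).filter (fun p => p.1 ≠ p.2) := by ext p; simp [Finset.mem_offDiag]
    rw [hT, hoff, Finset.sum_filter, Finset.sum_product]
    have hinner : ∀ x : α,
        (∑ y : α, if x ≠ y then X ↑x ↑y else 0)
          = ∑ j ∈ C, if (↑x : Fin n) ≠ j then X ↑x j else 0 := by
      intro x
      rw [← Finset.sum_coe_sort C (fun j => if (↑x : Fin n) ≠ j then X ↑x j else 0)]
      refine Finset.sum_congr rfl fun y _ => ?_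
      congr 1
      exact propext (not_congr Subtype.ext_iff)
    rw [Finset.sum_congr rfl (fun x _ => hinner x)]
    rw [Finset.sum_coe_sort C (fun i => ∑ j ∈ C, if i ≠ j then X i j else 0)]
    have hsplit : ∀ i ∈ C, (∑ j ∈ C, if i ≠ j then X i j else 0)
        = (∑ j ∈ C, if i < j then X i j else 0) + (∑ j ∈ C, if j < i then X i j else 0) := by
      intro i _
      rw [← Finset.sum_add_distrib]
      refine Finset.sum_congr rfl fun j _ => ?_
      rcases lt_trichotomy i j with hh | hh | hh
      · simp [hh, ne_of_lt hh, not_lt_of_gt hh]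
      · simp [hh]
      · simp [hh, (ne_of_lt hh).symm, not_lt_of_gt hh]
    rw [Finset.sum_congr rfl hsplit, Finset.sum_add_distrib]
    have hA : (∑ i ∈ C, ∑ j ∈ C, if i < j then X i j else 0) = S := by
      rw [hS]
      exact Finset.sum_congr rfl fun i _ => (Finset.sum_filter _ _).symm
    have hB : (∑ i ∈ C, ∑ j ∈ C, if j < i then X i j else 0) = S := by
      have : ∀ i ∈ C, ∀ j ∈ C, (if j < i then X i j else 0) = (if j < i then X j i else 0) := by
        intro i _ j _
        rcases lt_or_ge j i with hh | hh
        · simp [hh, hX.apply]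
        · simp [not_lt_of_ge hh]
      rw [Finset.sum_congr rfl fun i hi => Finset.sum_congr rfl fun j hj => this i hi j hj]
      rw [Finset.sum_comm, hS]
      exact Finset.sum_congr rfl fun i _ => (Finset.sum_filter _ _).symm
    rw [hA, hB]
    ring
  -- final arithmetic
  have hMR : (1 : ℝ) ≤ (m : ℝ) := by exact_mod_cast hm1
  have hNR : (1 : ℝ) ≤ (N : ℝ) := by exact_mod_cast hN1
  have hcast : (Fintype.card (Equiv.Perm α) : ℝ) = 2 * (m : ℝ) * (2 * (m : ℝ) - 1) * (N : ℝ) := by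
    rw [hcards]
    have h1 : 1 ≤ 2 * m := by omega
    push_cast [Nat.cast_sub h1]
    ring
  have hγ : (C.card : ℝ) = 2 * (m : ℝ) := by rw [hm2]; push_cast; ring
  rw [hγ]
  rw [hcast, hγ, hT2] at htot
  have hpos : (0 : ℝ) < 2 * (m : ℝ) * (N : ℝ) := by nlinarith
  have key : (2 * (m : ℝ) * (N : ℝ)) * S
      ≤ (2 * (m : ℝ) * (N : ℝ)) * ((2 * (m : ℝ) - 1) * (2 * (m : ℝ) - 2) / 2) := by
    nlinarith [htot]
  exact (mul_le_mul_iff_right₀ hpos).mp key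
end
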